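/- Auxiliary to left monotonicity: if f s₁⋯s_n ⊐⊐ t and f s₁⋯s_n u is well-typed with n+1 ∈ π(f), then f s₁⋯s_n u ⊐⊐ t. -/

import Mathlib

namespace Horpo

/-- Simple types over a single collapsed sort ι. -/
inductive Ty where
  | base : Ty
  | arrow : Ty → Ty → Ty
deriving DecidableEq

/-- The argument types of a type: argTypes (σ₁ ⇒ … ⇒ σ_m ⇒ ι) = [σ₁,…,σ_m]. -/
def Ty.argTypes : Ty → List Ty
  | .base => []
  | .arrow a b => a :: b.argTypes

/-- A signature: typed function symbols over F, typed variables over V,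
    a precedence ⊵ (`prec`) and a filter π (`pi`, using 1-based indices). -/
structure Sig (F V : Type) where
  fty : F → Ty
  vty : V → Ty
  prec : F → F → Prop
  pi : F → Finset ℕ

variable {F V : Type}

/-- f ≡ g : equivalence part of the precedence. -/
def Sig.equiv (S : Sig F V) (f g : F) : Prop := S.prec f g ∧ S.prec g f

/-- f ⊳ g : strict part of the precedence. -/
def Sig.sgt (S : Sig F V) (f g : F) : Prop := S.prec f g ∧ ¬ S.prec g f

/-- maximal arity m of a symbol f :: σ₁ ⇒ … ⇒ σ_m ⇒ ι. -/
def Sig.arity (S : Sig F V) (f : F) : ℕ := (S.fty f).argTypes.length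

/-- Applicative (curried) terms. -/
inductive Tm (F V : Type) where
  | fv : V → Tm F V
  | fn : F → Tm F V
  | app : Tm F V → Tm F V → Tm F V

/-- h t₁ ⋯ t_n -/
def Tm.appList (h : Tm F V) (ts : List (Tm F V)) : Tm F V := ts.foldl Tm.app h

/-- Partial typing function. -/
def typeOf (S : Sig F V) : Tm F V → Option Ty
  | .fv x => some (S.vty x)
  | .fn f => some (S.fty f)
  | .app s t =>
    match typeOf S s, typeOf S t with
    | some (.arrow a b), some c => if a = c then some b else none
    | _, _ => none

/-- s and t are well-typed with the same type (structure). -/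
def sameTy (S : Sig F V) (s t : Tm F V) : Prop :=
  ∃ τ, typeOf S s = some τ ∧ typeOf S t = some τ

/-- The equivalence relation ≈, by the rules (Eq-mono) and (Eq-args). -/
inductive Approx (S : Sig F V) : Tm F V → Tm F V → Prop where
  | mono (x : V) (ss ts : List (Tm F V)) :
      ss.length = ts.length →
      (∀ (i : ℕ) (h1 : i < ss.length) (h2 : i < ts.length),
        Approx S (ss.get ⟨i, h1⟩) (ts.get ⟨i, h2⟩)) →
      sameTy S (Tm.appList (.fv x) ss) (Tm.appList (.fv x) ts) →
      Approx S (Tm.appList (.fv x) ss) (Tm.appList (.fv x) ts)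
  | args (f g : F) (ss ts : List (Tm F V)) :
      S.equiv f g → S.fty f = S.fty g → S.pi f = S.pi g →
      ss.length = ts.length →
      (∀ (i : ℕ) (h1 : i < ss.length) (h2 : i < ts.length),
        i + 1 ∈ S.pi f → Approx S (ss.get ⟨i, h1⟩) (ts.get ⟨i, h2⟩)) →
      sameTy S (Tm.appList (.fn f) ss) (Tm.appList (.fn g) ts) →
      Approx S (Tm.appList (.fn f) ss) (Tm.appList (.fn g) ts)

mutual
/-- s ⊒ t  iff  s ≈ t or s ⊐ t. -/
inductive GrEq (S : Sig F V) : Tm F V → Tm F V → Prop where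
  | of_approx {s t : Tm F V} : Approx S s t → GrEq S s t
  | of_gr {s t : Tm F V} : Gr S s t → GrEq S s t

/-- The strict relation ⊐, by rules (Gr-mono), (Gr-args), (Gr-rpo). -/
inductive Gr (S : Sig F V) : Tm F V → Tm F V → Prop where
  | mono (x : V) (ss ts : List (Tm F V)) (i : ℕ)
      (hi1 : i < ss.length) (hi2 : i < ts.length) :
      ss.length = ts.length →
      (∀ (j : ℕ) (h1 : j < ss.length) (h2 : j < ts.length),
        GrEq S (ss.get ⟨j, h1⟩) (ts.get ⟨j, h2⟩)) →
      Gr S (ss.get ⟨i, hi1⟩) (ts.get ⟨i, hi2⟩) →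
      sameTy S (Tm.appList (.fv x) ss) (Tm.appList (.fv x) ts) →
      Gr S (Tm.appList (.fv x) ss) (Tm.appList (.fv x) ts)
  | args (f g : F) (ss ts : List (Tm F V)) (i : ℕ)
      (hi1 : i < ss.length) (hi2 : i < ts.length) :
      S.equiv f g → S.fty f = S.fty g → S.pi f = S.pi g →
      ss.length = ts.length →
      (∀ (j : ℕ) (h1 : j < ss.length) (h2 : j < ts.length),
        j + 1 ∈ S.pi f → GrEq S (ss.get ⟨j, h1⟩) (ts.get ⟨j, h2⟩)) →
      i + 1 ∈ S.pi f →
      Gr S (ss.get ⟨i, hi1⟩) (ts.get ⟨i, hi2⟩) →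
      sameTy S (Tm.appList (.fn f) ss) (Tm.appList (.fn g) ts) →
      Gr S (Tm.appList (.fn f) ss) (Tm.appList (.fn g) ts)
  | rpo {s t : Tm F V} : Rpo S s t → sameTy S s t → Gr S s t

/-- The relation ⊐⊐, by rules (Rpo-select), (Rpo-appl), (Rpo-copy), (Rpo-lex).
    In each case the left side is f s₁⋯s_n with {n+1,…,m} ⊆ π(f). -/
inductive Rpo (S : Sig F V) : Tm F V → Tm F V → Prop where
  | select (f : F) (ss : List (Tm F V)) (t : Tm F V) (i : ℕ) (hi : i < ss.length) :
      ss.length ≤ S.arity f →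
      (∀ k : ℕ, ss.length + 1 ≤ k → k ≤ S.arity f → k ∈ S.pi f) →
      i + 1 ∈ S.pi f →
      GrEq S (ss.get ⟨i, hi⟩) t →
      Rpo S (Tm.appList (.fn f) ss) t
  | appl (f : F) (ss : List (Tm F V)) (t0 : Tm F V) (ts : List (Tm F V)) :
      ss.length ≤ S.arity f →
      (∀ k : ℕ, ss.length + 1 ≤ k → k ≤ S.arity f → k ∈ S.pi f) →
      ts ≠ [] →
      (∀ (i : ℕ) (h : i < ts.length), Rpo S (Tm.appList (.fn f) ss) (ts.get ⟨i, h⟩)) →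
      Rpo S (Tm.appList (.fn f) ss) (Tm.appList t0 ts)
  | copy (f : F) (ss : List (Tm F V)) (g : F) (ts : List (Tm F V)) :
      ss.length ≤ S.arity f →
      (∀ k : ℕ, ss.length + 1 ≤ k → k ≤ S.arity f → k ∈ S.pi f) →
      S.sgt f g →
      (∀ (i : ℕ) (h : i < ts.length), i + 1 ∈ S.pi g →
        Rpo S (Tm.appList (.fn f) ss) (ts.get ⟨i, h⟩)) →
      Rpo S (Tm.appList (.fn f) ss) (Tm.appList (.fn g) ts)
  | lex (f : F) (ss : List (Tm F V)) (g : F) (ts : List (Tm F V)) (i : ℕ)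
      (hi1 : i < ss.length) (hi2 : i < ts.length) :
      ss.length ≤ S.arity f →
      (∀ k : ℕ, ss.length + 1 ≤ k → k ≤ S.arity f → k ∈ S.pi f) →
      S.equiv f g →
      i + 1 ∈ S.pi f → i + 1 ∈ S.pi g →
      (∀ k : ℕ, 1 ≤ k → k ≤ i + 1 → (k ∈ S.pi f ↔ k ∈ S.pi g)) →
      (∀ (j : ℕ) (h1 : j < ss.length) (h2 : j < ts.length), j < i → j + 1 ∈ S.pi f →
        Approx S (ss.get ⟨j, h1⟩) (ts.get ⟨j, h2⟩)) →
      Gr S (ss.get ⟨i, hi1⟩) (ts.get ⟨i, hi2⟩) →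
      (∀ (j : ℕ) (h : j < ts.length), i < j → j + 1 ∈ S.pi g →
        Rpo S (Tm.appList (.fn f) ss) (ts.get ⟨j, h⟩)) →
      Rpo S (Tm.appList (.fn f) ss) (Tm.appList (.fn g) ts)
end

/-- Substitution application. -/
def subst (γ : V → Tm F V) : Tm F V → Tm F V
  | .fv x => γ x
  | .fn f => .fn f
  | .app s t => .app (subst γ s) (subst γ t)

/-- s is terminating: no infinite ⊐-descending sequence starting at s. -/
def Terminating (S : Sig F V) (s : Tm F V) : Prop :=
  ¬ ∃ c : ℕ → Tm F V, c 0 = s ∧ ∀ n, Gr S (c n) (c (n + 1))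

/-- Computability, by recursion on the type structure. -/
def Computable (S : Sig F V) : Ty → Tm F V → Prop
  | .base, s => Terminating S s
  | .arrow a b, s =>
      ∀ t : Tm F V, typeOf S t = some a → Computable S a t → Computable S b (Tm.app s t)

/-- s is a well-typed computable term. -/
def Comp (S : Sig F V) (s : Tm F V) : Prop :=
  ∃ τ, typeOf S s = some τ ∧ Computable S τ s

/-- [s_i | i ∈ π(f)] : the list of arguments regarded by the filter. -/
def filtered (S : Sig F V) (f : F) (ss : List (Tm F V)) : List (Tm F V) :=
  (List.range ss.length).filterMap (fun i => if i + 1 ∈ S.pi f then ss[i]? else none)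

/-- The (E, R)-lexicographic extension to lists: xs is greater than ys. -/
def LexExt (E R : α → α → Prop) (xs ys : List α) : Prop :=
  ∃ (i : ℕ) (h1 : i < xs.length) (h2 : i < ys.length),
    (∀ (j : ℕ) (hj1 : j < xs.length) (hj2 : j < ys.length), j < i →
      E (xs.get ⟨j, hj1⟩) (ys.get ⟨j, hj2⟩)) ∧
    R (xs.get ⟨i, h1⟩) (ys.get ⟨i, h2⟩)

/-! Every rule of ⊐⊐ sees its left side f s₁⋯s_n only through the arguments s₁,…,s_n, the
bound n ≤ m and the filter condition {n+1,…,m} ⊆ π(f), and its recursive premises keep the same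
left side. Appending arguments u₁⋯u_k preserves all three as long as n + k ≤ m, which is what
well-typedness of f s₁⋯s_n u₁⋯u_k guarantees; so induction on the derivation of ⊐⊐ transports it
to the longer left side. -/

theorem Tm.appList_append (h : Tm F V) (ss us : List (Tm F V)) :
    h.appList (ss ++ us) = (h.appList ss).appList us :=
  List.foldl_append

theorem exists_arrow_of_typeOf_app {S : Sig F V} {s t : Tm F V} {τ : Ty}
    (h : typeOf S (.app s t) = some τ) : ∃ a, typeOf S s = some (.arrow a τ) := by
  simp only [typeOf] at h
  split at h
  next a b _ hs _ =>
    split_ifs at h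
    exact ⟨a, Option.some_inj.mp h ▸ hs⟩
  · contradiction

theorem argTypes_length_of_typeOf_appList {S : Sig F V} (ls : List (Tm F V)) :
    ∀ {h : Tm F V} {τ : Ty}, typeOf S (h.appList ls) = some τ →
      ∃ σ, typeOf S h = some σ ∧ ls.length + τ.argTypes.length = σ.argTypes.length := by
  induction ls with
  | nil => exact fun hτ => ⟨_, hτ, by simp⟩
  | cons a ls ih =>
    intro h τ hτ
    obtain ⟨σ, hσ, hlen⟩ := ih hτ
    obtain ⟨b, hb⟩ := exists_arrow_of_typeOf_app hσ
    exact ⟨_, hb, by simp only [Ty.argTypes, List.length_cons]; omega⟩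

theorem length_le_arity_of_typeOf_isSome {S : Sig F V} {f : F} {ss : List (Tm F V)}
    (hty : (typeOf S ((Tm.fn f).appList ss)).isSome) : ss.length ≤ S.arity f := by
  obtain ⟨τ, hτ⟩ := Option.isSome_iff_exists.mp hty
  obtain ⟨σ, hσ, hlen⟩ := argTypes_length_of_typeOf_appList ss hτ
  cases hσ
  unfold Sig.arity
  omega

theorem mem_pi_of_length_append_lt {S : Sig F V} {f : F} {ss : List (Tm F V)}
    (hgap : ∀ k : ℕ, ss.length + 1 ≤ k → k ≤ S.arity f → k ∈ S.pi f) (us : List (Tm F V)) :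
    ∀ k : ℕ, (ss ++ us).length + 1 ≤ k → k ≤ S.arity f → k ∈ S.pi f :=
  fun k hk => hgap k (by simp only [List.length_append] at hk; omega)

theorem get_append_of_lt {α : Type*} {ss : List α} (us : List α) {i : ℕ} (hi : i < ss.length)
    (hi' : i < (ss ++ us).length) : (ss ++ us).get ⟨i, hi'⟩ = ss.get ⟨i, hi⟩ :=
  List.getElem_append_left hi

theorem Rpo.appList_of_isSome {S : Sig F V} {s t : Tm F V} (h : Rpo S s t) :
    ∀ us : List (Tm F V), (typeOf S (s.appList us)).isSome → Rpo S (s.appList us) t := by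
  -- `induction` rejects the mutual family; only the premises in `Rpo` need the hypothesis.
  refine Rpo.rec (motive_1 := fun _ _ _ => True) (motive_2 := fun _ _ _ => True)
    (motive_3 := fun s t _ =>
      ∀ us : List (Tm F V), (typeOf S (s.appList us)).isSome → Rpo S (s.appList us) t)
    ?_ ?_ ?_ ?_ ?_ ?select ?appl ?copy ?lex h
  all_goals intros
  any_goals exact True.intro
  case select f ss t i hi _ hgap hpi hge _ us hty =>
    have hlen := length_le_arity_of_typeOf_isSome (Tm.appList_append _ ss us ▸ hty)
    rw [← Tm.appList_append]
    refine Rpo.select f (ss ++ us) t i (by rw [List.length_append]; omega) hlen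
      (mem_pi_of_length_append_lt hgap us) hpi ?_
    rwa [get_append_of_lt us hi]
  case appl f ss t0 ts _ hgap hne _ ih us hty =>
    have hlen := length_le_arity_of_typeOf_isSome (Tm.appList_append _ ss us ▸ hty)
    rw [← Tm.appList_append]
    refine Rpo.appl f (ss ++ us) t0 ts hlen (mem_pi_of_length_append_lt hgap us) hne fun i hi => ?_
    rw [Tm.appList_append]
    exact ih i hi us hty
  case copy f ss g ts _ hgap hfg _ ih us hty =>
    have hlen := length_le_arity_of_typeOf_isSome (Tm.appList_append _ ss us ▸ hty)
    rw [← Tm.appList_append]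
    refine Rpo.copy f (ss ++ us) g ts hlen (mem_pi_of_length_append_lt hgap us) hfg
      fun i hi hig => ?_
    rw [Tm.appList_append]
    exact ih i hi hig us hty
  case lex f ss g ts i hi1 hi2 _ hgap hfg hif hig hiff happrox hgr _ _ ih us hty =>
    have hlen := length_le_arity_of_typeOf_isSome (Tm.appList_append _ ss us ▸ hty)
    rw [← Tm.appList_append]
    refine Rpo.lex f (ss ++ us) g ts i (by rw [List.length_append]; omega) hi2 hlen
      (mem_pi_of_length_append_lt hgap us) hfg hif hig hiff (fun j _ hj2 hji hjf => ?_)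
      (get_append_of_lt us hi1 _ ▸ hgr) fun j hj hij hjg => ?_
    · rw [get_append_of_lt us (by omega)]
      exact happrox j _ hj2 hji hjf
    · rw [Tm.appList_append]
      exact ih j hj hij hjg us hty

/-- Auxiliary lemma: if f s₁⋯s_n ⊐⊐ t, the extension f s₁⋯s_n u is well-typed,
and n+1 ∈ π(f), then f s₁⋯s_n u ⊐⊐ t. -/
theorem rpo_extend (S : Sig F V) (f : F) (ss : List (Tm F V)) (u t : Tm F V)
    (h : Rpo S (Tm.appList (.fn f) ss) t)
    (hty : (typeOf S (Tm.appList (.fn f) (ss ++ [u]))).isSome)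
    (hpi : ss.length + 1 ∈ S.pi f) :
    Rpo S (Tm.appList (.fn f) (ss ++ [u])) t := by
  rw [Tm.appList_append] at hty ⊢
  exact h.appList_of_isSome [u] hty

end Horpo
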